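/- Let n, m ≥ 2 be natural numbers, b a nonnegative integer, and c ≥ 1 a natural number such that for every prime p dividing c there exists a natural number k ≥ 1 with p^k ≥ 3, φ(p^k) ∣ n, and m ≤ p^k − 1. Then the equation x_1^n + ⋯ + x_m^n = b·c^n has a solution in positive integers if and only if the equation x_1^n + ⋯ + x_m^n = b has a solution in positive integers. -/

import Mathlib

/-!
If `φ(p^k) ∣ n`, then modulo `p^k` every `n`-th power is `0` or `1` according as `p` divides the
base or not. So if `p^k` divides a sum of fewer than `p^k` such powers, `p` divides every base,
and a solution of `∑ xᵢ^n = N·p^n` descends to the solution `xᵢ/p` of `∑ xᵢ^n = N`. Peeling off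
the prime factors of `c` one at a time gives one direction; multiplying a solution by `c` gives
the other.
-/

open Finset
open scoped Nat

theorem Nat.le_totient_prime_pow {p : ℕ} (hp : p.Prime) (k : ℕ) : k ≤ φ (p ^ k) := by
  rcases Nat.eq_zero_or_pos k with rfl | hk
  · exact Nat.zero_le _
  rw [Nat.totient_prime_pow hp hk]
  have : k - 1 < p ^ (k - 1) := Nat.lt_pow_self hp.one_lt
  have : 0 < p - 1 := Nat.sub_pos_of_lt hp.one_lt
  calc k ≤ p ^ (k - 1) := by omega
    _ ≤ p ^ (k - 1) * (p - 1) := Nat.le_mul_of_pos_right _ this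

theorem Nat.prime_pow_dvd_pow_of_totient_dvd {p k n x : ℕ} (hp : p.Prime) (hφ : φ (p ^ k) ∣ n)
    (hn : 0 < n) (hpx : p ∣ x) : p ^ k ∣ x ^ n :=
  (pow_dvd_pow p ((Nat.le_totient_prime_pow hp k).trans (Nat.le_of_dvd hn hφ))).trans
    (pow_dvd_pow_of_dvd hpx n)

theorem ZMod.natCast_pow_eq_ite_of_totient_dvd {p k n : ℕ} (hp : p.Prime) (hφ : φ (p ^ k) ∣ n)
    (hn : 0 < n) (x : ℕ) : ((x ^ n : ℕ) : ZMod (p ^ k)) = if p ∣ x then 0 else 1 := by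
  split_ifs with hpx
  · exact (ZMod.natCast_eq_zero_iff _ _).mpr (Nat.prime_pow_dvd_pow_of_totient_dvd hp hφ hn hpx)
  · obtain ⟨t, rfl⟩ := hφ
    have hcop : x.Coprime (p ^ k) := ((hp.coprime_iff_not_dvd.mpr hpx).pow_left k).symm
    have : x ^ (φ (p ^ k) * t) ≡ 1 [MOD p ^ k] := by
      simpa [pow_mul] using (Nat.ModEq.pow_totient hcop).pow t
    simpa using (ZMod.natCast_eq_natCast_iff _ _ _).mpr this

theorem prime_dvd_of_prime_pow_dvd_sum_pow {ι : Type*} [Fintype ι] {p k n : ℕ} (hp : p.Prime)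
    (hφ : φ (p ^ k) ∣ n) (hn : 0 < n) (hι : Fintype.card ι < p ^ k) (x : ι → ℕ)
    (hdvd : p ^ k ∣ ∑ i, x i ^ n) (i : ι) : p ∣ x i := by
  classical
  set S := univ.filter fun i => ¬ p ∣ x i
  have hsum : ((∑ i, x i ^ n : ℕ) : ZMod (p ^ k)) = S.card := by
    simp_rw [Nat.cast_sum, ZMod.natCast_pow_eq_ite_of_totient_dvd hp hφ hn, sum_ite,
      sum_const_zero, sum_const, nsmul_one, zero_add, S]
  rw [(ZMod.natCast_eq_zero_iff _ _).mpr hdvd, eq_comm, ZMod.natCast_eq_zero_iff] at hsum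
  have hS : S.card = 0 :=
    Nat.eq_zero_of_dvd_of_lt hsum ((card_le_univ S).trans_lt hι)
  simpa using filter_eq_empty_iff.mp (card_eq_zero.mp hS) (mem_univ i)

def IsSumOfPosPowers (ι : Type*) [Fintype ι] (n N : ℕ) : Prop :=
  ∃ x : ι → ℕ, (∀ i, 0 < x i) ∧ ∑ i, x i ^ n = N

namespace IsSumOfPosPowers

variable {ι : Type*} [Fintype ι] {n N : ℕ}

theorem mul_pow {c : ℕ} (hc : 0 < c) (h : IsSumOfPosPowers ι n N) :
    IsSumOfPosPowers ι n (N * c ^ n) := by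
  obtain ⟨x, hx, rfl⟩ := h
  refine ⟨fun i => c * x i, fun i => Nat.mul_pos hc (hx i), ?_⟩
  simp_rw [_root_.mul_pow, ← mul_sum, mul_comm]

theorem of_mul_prime_pow {p k : ℕ} (hp : p.Prime) (hφ : φ (p ^ k) ∣ n) (hn : 0 < n)
    (hι : Fintype.card ι < p ^ k) (h : IsSumOfPosPowers ι n (N * p ^ n)) :
    IsSumOfPosPowers ι n N := by
  obtain ⟨x, hx, hsum⟩ := h
  have hpx (i : ι) : p ∣ x i := prime_dvd_of_prime_pow_dvd_sum_pow hp hφ hn hι x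
    (hsum ▸ dvd_mul_of_dvd_right (Nat.prime_pow_dvd_pow_of_totient_dvd hp hφ hn dvd_rfl) N) i
  choose y hy using hpx
  refine ⟨y, fun i => Nat.pos_of_mul_pos_left (hy i ▸ hx i), ?_⟩
  have : p ^ n * ∑ i, y i ^ n = p ^ n * N := by
    rw [mul_sum, mul_comm _ N, ← hsum]
    simp_rw [hy, _root_.mul_pow]
  exact Nat.eq_of_mul_eq_mul_left (pow_pos hp.pos n) this

theorem of_mul_pow {c : ℕ} (hn : 0 < n) (hc : 0 < c)
    (hφ : ∀ p : ℕ, p.Prime → p ∣ c → ∃ k : ℕ, φ (p ^ k) ∣ n ∧ Fintype.card ι < p ^ k)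
    (h : IsSumOfPosPowers ι n (N * c ^ n)) : IsSumOfPosPowers ι n N := by
  induction c using induction_on_primes generalizing N with
  | zero => exact absurd hc (lt_irrefl 0)
  | one => simpa using h
  | prime_mul p a hp ih =>
    obtain ⟨k, hk, hι⟩ := hφ p hp (dvd_mul_right p a)
    refine ih (Nat.pos_of_mul_pos_left hc) (fun q hq hqa => hφ q hq (dvd_mul_of_dvd_right hqa p))
      (of_mul_prime_pow hp hk hn hι ?_)
    convert h using 1; ring

end IsSumOfPosPowers

theorem stmt_16_general (n m b c : ℕ) (hn : 2 ≤ n) (hc : 1 ≤ c)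
    (hφ : ∀ p : ℕ, p.Prime → p ∣ c →
      ∃ k : ℕ, 1 ≤ k ∧ 3 ≤ p ^ k ∧ Nat.totient (p ^ k) ∣ n ∧ m ≤ p ^ k - 1) :
    (∃ x : Fin m → ℕ, (∀ i, 0 < x i) ∧ ∑ i, x i ^ n = b * c ^ n) ↔
    (∃ x : Fin m → ℕ, (∀ i, 0 < x i) ∧ ∑ i, x i ^ n = b) := by
  refine ⟨IsSumOfPosPowers.of_mul_pow (by omega) hc fun p hp hpc => ?_,
    IsSumOfPosPowers.mul_pow hc⟩
  obtain ⟨k, -, hpk, hk, hm⟩ := hφ p hp hpc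
  exact ⟨k, hk, by rw [Fintype.card_fin]; omega⟩

/-- If `n, m ≥ 2` and `c ≥ 1` is such that every prime `p ∣ c` admits `k ≥ 1` with
`p^k ≥ 3`, `φ(p^k) ∣ n` and `m ≤ p^k - 1`, then `∑ xᵢ^n = b·c^n` is solvable in positive
integers iff `∑ xᵢ^n = b` is. -/
theorem stmt_16 (n m b c : ℕ) (hn : 2 ≤ n) (hm : 2 ≤ m) (hc : 1 ≤ c)
    (hφ : ∀ p : ℕ, p.Prime → p ∣ c →
      ∃ k : ℕ, 1 ≤ k ∧ 3 ≤ p ^ k ∧ Nat.totient (p ^ k) ∣ n ∧ m ≤ p ^ k - 1) :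
    (∃ x : Fin m → ℕ, (∀ i, 0 < x i) ∧ ∑ i, x i ^ n = b * c ^ n) ↔
    (∃ x : Fin m → ℕ, (∀ i, 0 < x i) ∧ ∑ i, x i ^ n = b) :=
  stmt_16_general n m b c hn hc hφ
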